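/- arXiv:2008.06564 — 4 statements merged into one kernel-verified Lean document; each statement's English description precedes it below -/
import Mathlib

section
/- Let (Ω, ℱ, P) be a probability space, X : Ω → ℝ^d a random vector, D : Ω → ℝ a random variable taking only the values 0 and 1, and Y₀, Y₁ : Ω → ℝ integrable random variables. Let 𝒢 := σ(X) and let p(X) := E[D | 𝒢] be the propensity score. Assume: (i) D and Y₀ are conditionally independent given 𝒢 (ignorability); (ii) there is ε > 0 with p(X) ≤ 1 − ε almost surely (overlap); (iii) q := P(D = 1) > 0; (iv) D·Y₁ and D·Y₀ are integrable. Define Y := D·Y₁ + (1 − D)·Y₀. Then E[ Y·(D − p(X)) / (q·(1 − p(X))) ] = E[ Y₁ − Y₀ | D = 1 ]. -/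
open MeasureTheory ProbabilityTheory Set

lemma aux_isPiSystem_preimage_Iic_rat {Ω : Type*} (h : Ω → ℝ) :
    IsPiSystem (⋃ q : ℚ, {h ⁻¹' Iic (q : ℝ)}) := by
  rintro s hs t ht -
  simp only [mem_iUnion, mem_singleton_iff] at *
  obtain ⟨q, rfl⟩ := hs
  obtain ⟨r, rfl⟩ := ht
  exact ⟨min q r, by rw [← preimage_inter, Iic_inter_Iic, Rat.cast_min]⟩

lemma aux_comap_eq_generateFrom {Ω : Type*} (h : Ω → ℝ) :
    MeasurableSpace.comap h inferInstance
      = MeasurableSpace.generateFrom (⋃ q : ℚ, {h ⁻¹' Iic (q : ℝ)}) := by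
  conv_lhs => rw [show (inferInstance : MeasurableSpace ℝ) = borel ℝ from rfl,
    Real.borel_eq_generateFrom_Iic_rat, MeasurableSpace.comap_generateFrom]
  congr 1
  rw [image_iUnion]
  simp

/-- If `D` and `Y₀` are conditionally independent given `m'`, then the conditional expectation
of their product factors. -/
lemma aux_condexp_mul_of_condIndepFun {Ω : Type*} {m' : MeasurableSpace Ω}
    {mΩ : MeasurableSpace Ω} [StandardBorelSpace Ω]
    (hm' : m' ≤ mΩ) (P : Measure Ω) [IsProbabilityMeasure P] {D Y₀ : Ω → ℝ}
    (hDmeas : Measurable D) (hY₀meas : Measurable Y₀)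
    (hDint : Integrable D P) (hY₀int : Integrable Y₀ P)
    (hDY₀int : Integrable (fun ω => D ω * Y₀ ω) P)
    (hign : CondIndepFun m' hm' D Y₀ P) :
    P[fun ω => D ω * Y₀ ω | m'] =ᵐ[P] fun ω => (P[D | m']) ω * (P[Y₀ | m']) ω := by
  set κ := condExpKernel P m' with hκdef
  have hign' : Kernel.IndepFun D Y₀ (condExpKernel P m') (P.trim hm') := hign
  have hK : ∀ᵐ ω ∂P, ∀ q r : ℚ, κ ω (D ⁻¹' Iic (q : ℝ) ∩ Y₀ ⁻¹' Iic (r : ℝ))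
      = κ ω (D ⁻¹' Iic (q : ℝ)) * κ ω (Y₀ ⁻¹' Iic (r : ℝ)) := by
    rw [ae_all_iff]
    intro s
    rw [ae_all_iff]
    intro r
    exact ae_of_ae_trim hm'
      ((Kernel.indepFun_iff_measure_inter_preimage_eq_mul.mp hign')
        (Iic (s : ℝ)) (Iic (r : ℝ)) measurableSet_Iic measurableSet_Iic)
  have hIndep : ∀ᵐ ω ∂P, IndepFun D Y₀ (κ ω) := by
    filter_upwards [hK] with ω h
    have hfun : IndepSets (⋃ s : ℚ, {D ⁻¹' Iic (s : ℝ)}) (⋃ r : ℚ, {Y₀ ⁻¹' Iic (r : ℝ)})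
        (κ ω) := by
      rintro s t hs ht
      simp only [mem_iUnion, mem_singleton_iff] at hs ht
      obtain ⟨a, rfl⟩ := hs
      obtain ⟨b, rfl⟩ := ht
      exact ae_of_all _ fun _ => h a b
    exact IndepSets.indep hDmeas.comap_le hY₀meas.comap_le
      (aux_isPiSystem_preimage_Iic_rat D) (aux_isPiSystem_preimage_Iic_rat Y₀)
      (aux_comap_eq_generateFrom D) (aux_comap_eq_generateFrom Y₀) hfun
  have hDk := hDint.condExpKernel_ae (m := m')
  have hY₀k := hY₀int.condExpKernel_ae (m := m')
  have hmul : (fun ω => ∫ y, D y * Y₀ y ∂κ ω) =ᵐ[P]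
      fun ω => (∫ y, D y ∂κ ω) * ∫ y, Y₀ y ∂κ ω := by
    filter_upwards [hIndep, hDk, hY₀k] with ω h1 h2 h3
    exact IndepFun.integral_fun_mul_eq_mul_integral h1 h2.1 h3.1
  have hgk := condExp_ae_eq_integral_condExpKernel (μ := P) hm' hY₀int
  have hDc := condExp_ae_eq_integral_condExpKernel (μ := P) hm' hDint
  have hDY₀k := condExp_ae_eq_integral_condExpKernel (μ := P) hm' hDY₀int
  filter_upwards [hmul, hgk, hDc, hDY₀k] with ω h1 h2 h3 h4
  rw [h4, h1, ← h3, ← h2]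

/-- Proposition 1 of the paper: under ignorability (conditional independence of the treatment
indicator `D ∈ {0,1}` and the untreated potential outcome `Y₀` given the covariates
`𝒢 = σ(X)`), overlap (`p(X) = E[D | σ(X)] ≤ 1 − ε` a.s.), and `q = P(D = 1) > 0`, the
transformed observed outcome `Y·(D − p(X)) / (q·(1 − p(X)))` has mean equal to the average
treatment effect on the treated `E[Y₁ − Y₀ | D = 1]`. -/
theorem atet_transformed_outcome_unbiased
    {Ω : Type*} {mΩ : MeasurableSpace Ω} [StandardBorelSpace Ω] [Nonempty Ω]
    (P : Measure Ω) [IsProbabilityMeasure P]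
    {d : ℕ} (X : Ω → (Fin d → ℝ)) (hX : Measurable X)
    (D Y₀ Y₁ : Ω → ℝ) (hDmeas : Measurable D) (hY₀meas : Measurable Y₀)
    (hD01 : ∀ ω, D ω = 0 ∨ D ω = 1)
    (hY₀int : Integrable Y₀ P) (hY₁int : Integrable Y₁ P)
    (hign : CondIndepFun (MeasurableSpace.comap X inferInstance)
      (measurable_iff_comap_le.mp hX) D Y₀ P)
    (pX : Ω → ℝ) (hpX : pX = P[D | MeasurableSpace.comap X inferInstance])
    (ε : ℝ) (hε : 0 < ε) (hoverlap : ∀ᵐ ω ∂P, pX ω ≤ 1 - ε)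
    (q : ℝ) (hq : q = (P {ω | D ω = 1}).toReal) (hq0 : 0 < q)
    (hDY₁int : Integrable (fun ω => D ω * Y₁ ω) P)
    (hDY₀int : Integrable (fun ω => D ω * Y₀ ω) P)
    (Y : Ω → ℝ) (hY : ∀ ω, Y ω = D ω * Y₁ ω + (1 - D ω) * Y₀ ω) :
    ∫ ω, Y ω * (D ω - pX ω) / (q * (1 - pX ω)) ∂P
      = ∫ ω, (Y₁ ω - Y₀ ω) ∂(P[|{ω | D ω = 1}]) := by
  have hm' : MeasurableSpace.comap X inferInstance ≤ mΩ := measurable_iff_comap_le.mp hX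
  -- D is integrable
  have hDint : Integrable D P := by
    refine (integrable_const (1 : ℝ)).mono' hDmeas.aestronglyMeasurable ?_
    exact ae_of_all _ fun ω => by rcases hD01 ω with h | h <;> simp [h]
  set g : Ω → ℝ := P[Y₀ | MeasurableSpace.comap X inferInstance] with hgdef
  -- Key lemma: E[D·Y₀ | σ(X)] = pX · E[Y₀ | σ(X)] a.e.
  have hKeq : P[fun ω => D ω * Y₀ ω | MeasurableSpace.comap X inferInstance]
      =ᵐ[P] fun ω => pX ω * g ω := by
    rw [hgdef, hpX]
    exact aux_condexp_mul_of_condIndepFun hm' P hDmeas hY₀meas hDint hY₀int hDY₀int hign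
  -- basic facts about pX and f
  have hpX0 : 0 ≤ᵐ[P] pX := by
    rw [hpX]
    exact condExp_nonneg (ae_of_all _ fun ω => by rcases hD01 ω with h | h <;> simp [h])
  have hpXm : StronglyMeasurable[MeasurableSpace.comap X inferInstance] pX :=
    hpX ▸ stronglyMeasurable_condExp
  set f : Ω → ℝ := fun ω => pX ω / (1 - pX ω) with hfdef
  have hfm : StronglyMeasurable[MeasurableSpace.comap X inferInstance] f :=
    (hpXm.measurable.div (measurable_const.sub hpXm.measurable)).stronglyMeasurable
  have hfb : ∀ᵐ ω ∂P, ‖f ω‖ ≤ 1 / ε := by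
    filter_upwards [hpX0, hoverlap] with ω h0 h1
    have hd : ε ≤ 1 - pX ω := by linarith
    rw [hfdef, Real.norm_eq_abs, abs_div, abs_of_nonneg h0,
      abs_of_nonneg (by linarith : (0 : ℝ) ≤ 1 - pX ω),
      div_le_div_iff₀ (by linarith) hε]
    nlinarith
  -- integrabilities
  have hfY₀int : Integrable (fun ω => f ω * Y₀ ω) P := by
    refine Integrable.mono' (hY₀int.norm.const_mul (1 / ε))
      ((hfm.mono hm').aestronglyMeasurable.mul hY₀int.1) ?_
    filter_upwards [hfb] with ω h
    rw [norm_mul]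
    exact mul_le_mul_of_nonneg_right h (norm_nonneg _)
  have hfDY₀int : Integrable (fun ω => f ω * (D ω * Y₀ ω)) P := by
    refine Integrable.mono' (hDY₀int.norm.const_mul (1 / ε))
      ((hfm.mono hm').aestronglyMeasurable.mul hDY₀int.1) ?_
    filter_upwards [hfb] with ω h
    rw [norm_mul]
    exact mul_le_mul_of_nonneg_right h (norm_nonneg _)
  have hgint : Integrable g P := integrable_condExp
  have hfgint : Integrable (fun ω => f ω * g ω) P := by
    refine Integrable.mono' (hgint.norm.const_mul (1 / ε))
      ((hfm.mono hm').aestronglyMeasurable.mul hgint.1) ?_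
    filter_upwards [hfb] with ω h
    rw [norm_mul]
    exact mul_le_mul_of_nonneg_right h (norm_nonneg _)
  have hfpXgint : Integrable (fun ω => f ω * (pX ω * g ω)) P := by
    refine Integrable.mono' (hgint.norm.const_mul (1 / ε))
      (((hfm.mono hm').aestronglyMeasurable).mul
        (((hpXm.mono hm').aestronglyMeasurable).mul hgint.1)) ?_
    filter_upwards [hfb, hpX0, hoverlap] with ω h h0 h1
    have hpX1 : |pX ω| ≤ 1 := by rw [abs_of_nonneg h0]; linarith
    rw [norm_mul, norm_mul, Real.norm_eq_abs (pX ω)]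
    calc ‖f ω‖ * (|pX ω| * ‖g ω‖) ≤ (1 / ε) * (1 * ‖g ω‖) := by
          apply mul_le_mul h (mul_le_mul hpX1 le_rfl (norm_nonneg _) zero_le_one)
            (by positivity) (by positivity)
      _ = (1 / ε) * ‖g ω‖ := by ring
  -- conditional expectation pull-out identities
  have hc1 : P[f * Y₀ | MeasurableSpace.comap X inferInstance] =ᵐ[P] f * g := by
    rw [hgdef]
    exact condExp_stronglyMeasurable_mul_of_bound hm' hfm hY₀int (1 / ε) hfb
  have hc2 : P[f * fun ω => D ω * Y₀ ω | MeasurableSpace.comap X inferInstance]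
      =ᵐ[P] fun ω => f ω * (pX ω * g ω) := by
    refine (condExp_stronglyMeasurable_mul_of_bound hm' hfm hDY₀int (1 / ε) hfb).trans ?_
    filter_upwards [hKeq] with ω h
    rw [Pi.mul_apply, h]
  -- integral identities
  have I1 : ∫ ω, f ω * Y₀ ω ∂P = ∫ ω, f ω * g ω ∂P := by
    have h1 : ∫ ω, (P[f * Y₀ | MeasurableSpace.comap X inferInstance]) ω ∂P
        = ∫ ω, f ω * Y₀ ω ∂P := integral_condExp hm'
    have h2 : ∫ ω, (P[f * Y₀ | MeasurableSpace.comap X inferInstance]) ω ∂P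
        = ∫ ω, f ω * g ω ∂P := integral_congr_ae hc1
    rw [← h1, h2]
  have I2 : ∫ ω, f ω * (D ω * Y₀ ω) ∂P = ∫ ω, f ω * (pX ω * g ω) ∂P := by
    have h1 : ∫ ω, (P[f * fun ω => D ω * Y₀ ω | MeasurableSpace.comap X inferInstance]) ω ∂P
        = ∫ ω, f ω * (D ω * Y₀ ω) ∂P := integral_condExp hm'
    have h2 : ∫ ω, (P[f * fun ω => D ω * Y₀ ω | MeasurableSpace.comap X inferInstance]) ω ∂P
        = ∫ ω, f ω * (pX ω * g ω) ∂P := integral_congr_ae hc2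
    rw [← h1, h2]
  have I3 : ∫ ω, D ω * Y₀ ω ∂P = ∫ ω, pX ω * g ω ∂P := by
    have h1 : ∫ ω, (P[fun ω => D ω * Y₀ ω | MeasurableSpace.comap X inferInstance]) ω ∂P
        = ∫ ω, D ω * Y₀ ω ∂P := integral_condExp hm'
    rw [← h1]
    exact integral_congr_ae hKeq
  -- key cancellation
  have key : ∫ ω, (1 - D ω) * (Y₀ ω * f ω) ∂P = ∫ ω, D ω * Y₀ ω ∂P := by
    have hsplit : ∫ ω, (1 - D ω) * (Y₀ ω * f ω) ∂P
        = ∫ ω, f ω * Y₀ ω ∂P - ∫ ω, f ω * (D ω * Y₀ ω) ∂P := by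
      rw [← integral_sub hfY₀int hfDY₀int]
      apply integral_congr_ae
      exact ae_of_all _ fun ω => by simp only [Pi.sub_apply, Pi.mul_apply]; ring
    rw [hsplit, I1, I2, ← integral_sub hfgint hfpXgint, I3]
    apply integral_congr_ae
    filter_upwards [hpX0, hoverlap] with ω h0 h1
    have hne : 1 - pX ω ≠ 0 := ne_of_gt (by linarith)
    simp only [hfdef]
    field_simp
  -- integrability of the second LHS piece
  have h1mDint : Integrable (fun ω => (1 - D ω) * (Y₀ ω * f ω)) P := by
    refine Integrable.mono' (hY₀int.norm.const_mul (1 / ε))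
      ((aestronglyMeasurable_const.sub hDmeas.aestronglyMeasurable).mul
        (hY₀int.1.mul (hfm.mono hm').aestronglyMeasurable)) ?_
    filter_upwards [hfb] with ω h
    rcases hD01 ω with h0 | h0
    · rw [h0]
      simp only [sub_zero, one_mul, norm_mul]
      calc ‖Y₀ ω‖ * ‖f ω‖ ≤ ‖Y₀ ω‖ * (1 / ε) :=
            mul_le_mul_of_nonneg_left h (norm_nonneg _)
        _ = (1 / ε) * ‖Y₀ ω‖ := by ring
    · rw [h0]
      simp only [sub_self, zero_mul, norm_zero]
      positivity
  -- rewrite the LHS integrand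
  have hae : (fun ω => Y ω * (D ω - pX ω) / (q * (1 - pX ω))) =ᵐ[P]
      fun ω => q⁻¹ * (D ω * Y₁ ω) - q⁻¹ * ((1 - D ω) * (Y₀ ω * f ω)) := by
    filter_upwards [hoverlap] with ω h1
    have hne : 1 - pX ω ≠ 0 := ne_of_gt (by linarith)
    simp only [hfdef]
    rcases hD01 ω with h0 | h0 <;> rw [hY ω, h0] <;>
      field_simp <;> ring
  rw [integral_congr_ae hae,
    integral_sub (hDY₁int.const_mul _) (h1mDint.const_mul _),
    integral_const_mul, integral_const_mul, key]
  -- compute the RHS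
  have hA : MeasurableSet {ω | D ω = 1} := hDmeas (measurableSet_singleton 1)
  have hind : (fun ω => Set.indicator {ω | D ω = 1} (fun ω => Y₁ ω - Y₀ ω) ω)
      =ᵐ[P] fun ω => D ω * Y₁ ω - D ω * Y₀ ω := by
    refine ae_of_all _ fun ω => ?_
    rcases hD01 ω with h0 | h0 <;>
      simp [Set.indicator_apply, Set.mem_setOf_eq, h0]
  rw [show P[|{ω | D ω = 1}] = (P {ω | D ω = 1})⁻¹ • P.restrict {ω | D ω = 1} from rfl,
    integral_smul_measure, ← integral_indicator hA, integral_congr_ae hind,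
    integral_sub hDY₁int hDY₀int, ENNReal.toReal_inv, ← hq, smul_eq_mul]
  ring
end

section
/- Let (Ω, ℱ, P) be a probability space, X : Ω → ℝ^d a random vector, D : Ω → ℝ a random variable taking only the values 0 and 1, and Y₀, Y₁ : Ω → ℝ integrable random variables with D·Y₁ and D·Y₀ integrable. Let 𝒢 := σ(X) and p(X) := E[D | 𝒢]. Assume D and Y₀ are conditionally independent given 𝒢. Define Y := D·Y₁ + (1 − D)·Y₀. Then, almost surely, E[ Y·(D − p(X)) | 𝒢 ] = (1 − p(X)) · E[ D·(Y₁ − Y₀) | 𝒢 ]. -/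
open MeasureTheory ProbabilityTheory

lemma ae_indepFun_condexpKernel
    {Ω : Type*} {m' : MeasurableSpace Ω} {mΩ : MeasurableSpace Ω}
    [StandardBorelSpace Ω] [Nonempty Ω]
    (P : Measure Ω) [IsProbabilityMeasure P]
    (hm' : m' ≤ mΩ) {f g : Ω → ℝ}
    (hf : Measurable f) (hg : Measurable g)
    (h : CondIndepFun m' hm' f g P) :
    ∀ᵐ ω ∂P, IndepFun f g (condExpKernel P m' ω) := by
  have hQ : ∀ᵐ ω ∂P, ∀ (q r : ℚ),
      condExpKernel P m' ω (f ⁻¹' Set.Iio (q:ℝ) ∩ g ⁻¹' Set.Iio (r:ℝ))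
        = condExpKernel P m' ω (f ⁻¹' Set.Iio (q:ℝ))
          * condExpKernel P m' ω (g ⁻¹' Set.Iio (r:ℝ)) := by
    rw [ae_all_iff]
    intro q
    rw [ae_all_iff]
    intro r
    refine ae_of_ae_trim hm' ?_
    exact h _ _ ⟨Set.Iio (q:ℝ), measurableSet_Iio, rfl⟩
      ⟨Set.Iio (r:ℝ), measurableSet_Iio, rfl⟩
  filter_upwards [hQ] with ω hω
  rw [indepFun_iff_measure_inter_preimage_eq_mul]
  intro s t hs ht
  have hgen : ∀ (φ : Ω → ℝ), MeasurableSpace.comap φ (inferInstance : MeasurableSpace ℝ)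
      = MeasurableSpace.generateFrom ((Set.preimage φ) '' (⋃ a : ℚ, {Set.Iio (a:ℝ)})) := by
    intro φ
    rw [show (inferInstance : MeasurableSpace ℝ) = borel ℝ from rfl,
      Real.borel_eq_generateFrom_Iio_rat, MeasurableSpace.comap_generateFrom]
  have hpi : ∀ (φ : Ω → ℝ), IsPiSystem ((Set.preimage φ) '' (⋃ a : ℚ, {Set.Iio (a:ℝ)})) := by
    rintro φ s ⟨s', hs', rfl⟩ t ⟨t', ht', rfl⟩ -
    simp only [Set.mem_iUnion, Set.mem_singleton_iff] at hs' ht'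
    obtain ⟨q, rfl⟩ := hs'
    obtain ⟨r, rfl⟩ := ht'
    refine ⟨Set.Iio ((min q r : ℚ) : ℝ), ?_, ?_⟩
    · exact Set.mem_iUnion.2 ⟨min q r, rfl⟩
    · rw [← Set.preimage_inter, Set.Iio_inter_Iio, Rat.cast_min]
  have hInd : Indep (MeasurableSpace.comap f inferInstance)
      (MeasurableSpace.comap g inferInstance) (condExpKernel P m' ω) := by
    refine IndepSets.indep (hf.comap_le) (hg.comap_le) (hpi f) (hpi g) (hgen f) (hgen g) ?_
    rintro t1 t2 ⟨s', hs', rfl⟩ ⟨t', ht', rfl⟩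
    simp only [Set.mem_iUnion, Set.mem_singleton_iff] at hs' ht'
    obtain ⟨q, rfl⟩ := hs'
    obtain ⟨r, rfl⟩ := ht'
    exact Filter.Eventually.of_forall fun _ => hω q r
  simpa [ae_dirac_eq] using hInd _ _ ⟨s, hs, rfl⟩ ⟨t, ht, rfl⟩

/-- Conditional independence implies the product rule for conditional expectations. -/
lemma condexp_mul_of_condIndepFun
    {Ω : Type*} {m' : MeasurableSpace Ω} {mΩ : MeasurableSpace Ω}
    [StandardBorelSpace Ω] [Nonempty Ω]
    (P : Measure Ω) [IsProbabilityMeasure P]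
    (hm' : m' ≤ mΩ) {f g : Ω → ℝ}
    (hf : Measurable f) (hg : Measurable g)
    (hfint : Integrable f P) (hgint : Integrable g P)
    (hfgint : Integrable (fun ω => f ω * g ω) P)
    (h : CondIndepFun m' hm' f g P) :
    P[fun ω => f ω * g ω | m'] =ᵐ[P] fun ω => (P[f|m']) ω * (P[g|m']) ω := by
  have hae := ae_indepFun_condexpKernel P hm' hf hg h
  have h1 := condExp_ae_eq_integral_condExpKernel hm' hfgint
  have h2 := condExp_ae_eq_integral_condExpKernel hm' hfint
  have h3 := condExp_ae_eq_integral_condExpKernel hm' hgint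
  filter_upwards [hae, h1, h2, h3] with ω hind e1 e2 e3
  rw [e1, e2, e3]
  exact IndepFun.integral_fun_mul_eq_mul_integral hind hf.aestronglyMeasurable hg.aestronglyMeasurable

/-- The conditional-on-covariates step in the proof of Proposition 1 of the paper: with
`𝒢 = σ(X)`, `p(X) = E[D | 𝒢]` and `Y = D·Y₁ + (1 − D)·Y₀`, conditional independence of
`D ∈ {0,1}` and `Y₀` given `𝒢` yields
`E[Y·(D − p(X)) | 𝒢] = (1 − p(X))·E[D·(Y₁ − Y₀) | 𝒢]` almost surely. -/
theorem condexp_transformed_outcome_eq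
    {Ω : Type*} {mΩ : MeasurableSpace Ω} [StandardBorelSpace Ω] [Nonempty Ω]
    (P : Measure Ω) [IsProbabilityMeasure P]
    {d : ℕ} (X : Ω → (Fin d → ℝ)) (hX : Measurable X)
    (D Y₀ Y₁ : Ω → ℝ) (hDmeas : Measurable D) (hY₀meas : Measurable Y₀)
    (hD01 : ∀ ω, D ω = 0 ∨ D ω = 1)
    (hY₀int : Integrable Y₀ P) (hY₁int : Integrable Y₁ P)
    (hDY₁int : Integrable (fun ω => D ω * Y₁ ω) P)
    (hDY₀int : Integrable (fun ω => D ω * Y₀ ω) P)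
    (hign : CondIndepFun (MeasurableSpace.comap X inferInstance)
      (measurable_iff_comap_le.mp hX) D Y₀ P)
    (pX : Ω → ℝ) (hpX : pX = P[D | MeasurableSpace.comap X inferInstance])
    (Y : Ω → ℝ) (hY : ∀ ω, Y ω = D ω * Y₁ ω + (1 - D ω) * Y₀ ω) :
    P[fun ω => Y ω * (D ω - pX ω) | MeasurableSpace.comap X inferInstance]
      =ᵐ[P] fun ω => (1 - pX ω) *
        (P[fun ω' => D ω' * (Y₁ ω' - Y₀ ω') | MeasurableSpace.comap X inferInstance]) ω := by
  set m' : MeasurableSpace Ω := MeasurableSpace.comap X inferInstance with hm'def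
  have hm' : m' ≤ mΩ := measurable_iff_comap_le.mp hX
  -- D is bounded, hence integrable
  have hDint : Integrable D P := by
    refine Integrable.mono' (integrable_const (1:ℝ)) hDmeas.aestronglyMeasurable ?_
    exact Filter.Eventually.of_forall fun ω => by rcases hD01 ω with h | h <;> simp [h]
  -- pX is m'-strongly measurable and a.e. bounded by 1
  have hpX_sm : StronglyMeasurable[m'] pX := hpX ▸ stronglyMeasurable_condExp
  have hpX_bdd : ∀ᵐ ω ∂P, ‖pX ω‖ ≤ 1 := by
    have h0 : 0 ≤ᵐ[P] P[D|m'] :=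
      condExp_nonneg (Filter.Eventually.of_forall fun ω => by
        rcases hD01 ω with h | h <;> simp [h])
    have h1 : P[D|m'] ≤ᵐ[P] P[(fun _ => (1:ℝ))|m'] :=
      condExp_mono hDint (integrable_const 1) (Filter.Eventually.of_forall fun ω => by
        rcases hD01 ω with h | h <;> simp [h])
    rw [condExp_const hm' (1:ℝ)] at h1
    filter_upwards [h0, h1] with ω h0 h1
    simp only [Pi.zero_apply] at h0
    rw [hpX, Real.norm_eq_abs, abs_le]
    exact ⟨by linarith, h1⟩
  -- the key product rule from conditional independence
  have hkey : P[fun ω => D ω * Y₀ ω | m'] =ᵐ[P] fun ω => pX ω * (P[Y₀|m']) ω := by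
    have := condexp_mul_of_condIndepFun P hm' hDmeas hY₀meas hDint hY₀int hDY₀int hign
    filter_upwards [this] with ω hω
    rw [hω, hpX]
  -- pointwise decomposition of the transformed outcome
  have hfun : (fun ω => Y ω * (D ω - pX ω))
      = (fun ω => (1 - pX ω) * (D ω * (Y₁ ω - Y₀ ω)))
        + ((fun ω => D ω * Y₀ ω) - fun ω => pX ω * Y₀ ω) := by
    funext ω
    simp only [Pi.add_apply, Pi.sub_apply]
    rcases hD01 ω with h | h <;> rw [hY ω, h] <;> ring
  -- integrability of the pieces
  have hDY₁Y₀int : Integrable (fun ω => D ω * (Y₁ ω - Y₀ ω)) P := by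
    have := hDY₁int.sub hDY₀int
    refine this.congr (Filter.Eventually.of_forall fun ω => ?_)
    simp only [Pi.sub_apply]; ring
  have hI1 : Integrable (fun ω => (1 - pX ω) * (D ω * (Y₁ ω - Y₀ ω))) P := by
    refine Integrable.bdd_mul (c := 2) hDY₁Y₀int
      ((stronglyMeasurable_const.sub hpX_sm).mono hm').aestronglyMeasurable ?_
    filter_upwards [hpX_bdd] with ω hω
    rw [Real.norm_eq_abs] at hω ⊢
    rw [abs_le] at hω ⊢
    constructor <;> linarith [hω.1, hω.2]
  have hI3 : Integrable (fun ω => pX ω * Y₀ ω) P :=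
    Integrable.bdd_mul (c := 1) hY₀int (hpX_sm.mono hm').aestronglyMeasurable hpX_bdd
  -- pull-out lemmas
  have hA : P[fun ω => (1 - pX ω) * (D ω * (Y₁ ω - Y₀ ω))|m']
      =ᵐ[P] (fun ω => 1 - pX ω) * P[fun ω => D ω * (Y₁ ω - Y₀ ω)|m'] :=
    condExp_stronglyMeasurable_mul_of_bound hm'
      (stronglyMeasurable_const.sub hpX_sm) hDY₁Y₀int 2
      (by filter_upwards [hpX_bdd] with ω hω
          rw [Real.norm_eq_abs] at hω ⊢
          rw [abs_le] at hω ⊢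
          constructor <;> linarith [hω.1, hω.2])
  have hC : P[fun ω => pX ω * Y₀ ω|m'] =ᵐ[P] pX * P[Y₀|m'] :=
    condExp_stronglyMeasurable_mul_of_bound hm' hpX_sm hY₀int 1 hpX_bdd
  -- combine everything
  rw [hfun]
  have hadd := condExp_add (μ := P) (m := m') hI1 (hDY₀int.sub hI3)
  have hsub := condExp_sub (μ := P) (m := m') hDY₀int hI3
  filter_upwards [hadd, hsub, hA, hkey, hC] with ω e1 e2 e3 e4 e5
  simp only [Pi.add_apply, Pi.sub_apply, Pi.mul_apply] at e1 e2 e3 e5 ⊢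
  rw [e1, e2, e3, e4, e5]
  ring
end

section
/- Let (Ω, ℱ, P) be a probability space, X : Ω → ℝ^d a random vector, D : Ω → ℝ a random variable taking only the values 0 and 1, and Y₀, Y₁ : Ω → ℝ integrable random variables. Let 𝒢 := σ(X) and p(X) := E[D | 𝒢]. Assume: (i) D is conditionally independent of the pair (Y₀, Y₁) given 𝒢; (ii) there is ε > 0 with ε ≤ p(X) ≤ 1 − ε almost surely (overlap); (iii) D·Y₁ and D·Y₀ are integrable. Define Y := D·Y₁ + (1 − D)·Y₀. Then E[ Y·(D − p(X)) / (p(X)·(1 − p(X))) ] = E[Y₁] − E[Y₀]. -/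
open MeasureTheory ProbabilityTheory

section AuxATE
open MeasurableSpace Set
set_option linter.unusedSectionVars false
open MeasureTheory ProbabilityTheory MeasurableSpace Set

variable {Ω : Type*} {m : MeasurableSpace Ω} {mΩ : MeasurableSpace Ω} [StandardBorelSpace Ω]
  [Nonempty Ω] {μ : Measure Ω} [IsProbabilityMeasure μ]

/-- a.e. independence under the conditional expectation kernel. -/
lemma ae_indepFun_of_condIndepFun (hm : m ≤ mΩ) {D Z : Ω → ℝ}
    (hD : Measurable D) (hZ : Measurable Z)
    (hindep : CondIndepFun m hm D Z μ) :
    ∀ᵐ ω ∂μ, IndepFun D Z (condExpKernel μ m ω) := by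
  have h := (Kernel.indepFun_iff_measure_inter_preimage_eq_mul.mp hindep)
  have h2 : ∀ᵐ ω ∂μ, ∀ q r : ℚ,
      condExpKernel μ m ω (D ⁻¹' Iic (q : ℝ) ∩ Z ⁻¹' Iic (r : ℝ))
        = condExpKernel μ m ω (D ⁻¹' Iic (q : ℝ)) * condExpKernel μ m ω (Z ⁻¹' Iic (r : ℝ)) := by
    rw [ae_all_iff]
    intro q
    rw [ae_all_iff]
    intro r
    exact ae_of_ae_trim hm (h (Iic (q : ℝ)) (Iic (r : ℝ)) measurableSet_Iic measurableSet_Iic)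
  filter_upwards [h2] with ω hω
  set ν := condExpKernel μ m ω with hν
  let p1 : Set (Set Ω) := (fun s => D ⁻¹' s) '' (⋃ q : ℚ, {Iic (q : ℝ)})
  let p2 : Set (Set Ω) := (fun s => Z ⁻¹' s) '' (⋃ q : ℚ, {Iic (q : ℝ)})
  have hmem : ∀ (f : Ω → ℝ) s, s ∈ (fun s => f ⁻¹' s) '' (⋃ q : ℚ, {Iic (q : ℝ)}) ↔
      ∃ q : ℚ, s = f ⁻¹' Iic (q : ℝ) := by
    intro f s
    simp only [mem_image, mem_iUnion, mem_singleton_iff]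
    constructor
    · rintro ⟨x, ⟨y, rfl⟩, rfl⟩; exact ⟨y, rfl⟩
    · rintro ⟨q, rfl⟩; exact ⟨Iic (q : ℝ), ⟨q, rfl⟩, rfl⟩
  have hpi : ∀ (f : Ω → ℝ), IsPiSystem ((fun s => f ⁻¹' s) '' (⋃ q : ℚ, {Iic (q : ℝ)})) := by
    intro f s hs t ht _
    simp only [mem_image, mem_iUnion, mem_singleton_iff, exists_prop] at hs ht ⊢
    obtain ⟨s', ⟨q, rfl⟩, rfl⟩ := hs
    obtain ⟨t', ⟨r, rfl⟩, rfl⟩ := ht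
    refine ⟨Iic ((min q r : ℚ) : ℝ), ⟨min q r, rfl⟩, ?_⟩
    rw [← preimage_inter, Iic_inter_Iic]
    push_cast
    rfl
  have hgen : ∀ (f : Ω → ℝ), MeasurableSpace.comap f inferInstance
      = generateFrom ((fun s => f ⁻¹' s) '' (⋃ q : ℚ, {Iic (q : ℝ)})) := by
    intro f
    conv_lhs => rw [show (inferInstance : MeasurableSpace ℝ) = borel ℝ from BorelSpace.measurable_eq,
      Real.borel_eq_generateFrom_Iic_rat]
    rw [MeasurableSpace.comap_generateFrom]
  have hsets : IndepSets p1 p2 ν := by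
    rintro t1 t2 ht1 ht2
    obtain ⟨q, rfl⟩ := (hmem D t1).mp ht1
    obtain ⟨r, rfl⟩ := (hmem Z t2).mp ht2
    refine Filter.Eventually.of_forall fun _ => ?_
    simpa using hω q r
  exact IndepSets.indep (hD.comap_le) (hZ.comap_le) (hpi D) (hpi Z) (hgen D) (hgen Z) hsets

/-- Product rule for the conditional expectation under conditional independence. -/
lemma condexp_mul_of_condIndepFun_s6 (hm : m ≤ mΩ) {D Z : Ω → ℝ}
    (hD : Measurable D) (hZ : Measurable Z)
    (hindep : CondIndepFun m hm D Z μ) (hDbd : ∀ ω, ‖D ω‖ ≤ 1)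
    (hZint : Integrable Z μ) (hDZint : Integrable (fun ω => D ω * Z ω) μ) :
    μ[fun ω => D ω * Z ω | m] =ᵐ[μ] fun ω => (μ[D|m]) ω * (μ[Z|m]) ω := by
  have hDint : Integrable D μ :=
    (integrable_const (1:ℝ)).mono' hD.aestronglyMeasurable (Filter.Eventually.of_forall hDbd)
  have h1 := condExp_ae_eq_integral_condExpKernel hm hDZint
  have h2 := condExp_ae_eq_integral_condExpKernel hm hDint
  have h3 := condExp_ae_eq_integral_condExpKernel hm hZint
  have h4 := ae_indepFun_of_condIndepFun hm hD hZ hindep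
  have h5 : ∀ᵐ ω ∂μ, Integrable Z (condExpKernel μ m ω) := hZint.condExpKernel_ae
  filter_upwards [h1, h2, h3, h4, h5] with ω hω1 hω2 hω3 hω4 hω5
  rw [hω1, hω2, hω3]
  have hDint' : Integrable D (condExpKernel μ m ω) :=
    (integrable_const (1:ℝ)).mono' hD.aestronglyMeasurable (Filter.Eventually.of_forall hDbd)
  have := hω4.integral_mul_eq_mul_integral hDint'.aestronglyMeasurable hω5.aestronglyMeasurable
  simpa [Pi.mul_apply] using this

lemma ate_main_aux {Ω : Type*} {m : MeasurableSpace Ω} {mΩ : MeasurableSpace Ω}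
    [StandardBorelSpace Ω] [Nonempty Ω] (P : Measure Ω) [IsProbabilityMeasure P]
    (hm : m ≤ mΩ)
    (D Y₀ Y₁ : Ω → ℝ) (hDmeas : Measurable D) (hY₀meas : Measurable Y₀)
    (hY₁meas : Measurable Y₁)
    (hD01 : ∀ ω, D ω = 0 ∨ D ω = 1)
    (hY₀int : Integrable Y₀ P) (hY₁int : Integrable Y₁ P)
    (hunconf : CondIndepFun m hm D (fun ω => (Y₀ ω, Y₁ ω)) P)
    (pX : Ω → ℝ) (hpX : pX = P[D | m])
    (ε : ℝ) (hε : 0 < ε)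
    (hoverlap : ∀ᵐ ω ∂P, ε ≤ pX ω ∧ pX ω ≤ 1 - ε)
    (hDY₁int : Integrable (fun ω => D ω * Y₁ ω) P)
    (hDY₀int : Integrable (fun ω => D ω * Y₀ ω) P)
    (Y : Ω → ℝ) (hY : ∀ ω, Y ω = D ω * Y₁ ω + (1 - D ω) * Y₀ ω) :
    ∫ ω, Y ω * (D ω - pX ω) / (pX ω * (1 - pX ω)) ∂P
      = (∫ ω, Y₁ ω ∂P) - ∫ ω, Y₀ ω ∂P := by
  haveI : SigmaFinite (P.trim hm) := by infer_instance
  have hDbd : ∀ ω, ‖D ω‖ ≤ 1 := by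
    intro ω; rcases hD01 ω with h | h <;> simp [h]
  have hD'bd : ∀ ω, ‖1 - D ω‖ ≤ 1 := by
    intro ω; rcases hD01 ω with h | h <;> simp [h]
  have hDint : Integrable D P :=
    (integrable_const (1:ℝ)).mono' hDmeas.aestronglyMeasurable (Filter.Eventually.of_forall hDbd)
  have hD'Y₀int : Integrable (fun ω => (1 - D ω) * Y₀ ω) P := by
    have h := hY₀int.sub hDY₀int
    have heq : (fun ω => (1 - D ω) * Y₀ ω) = fun ω => Y₀ ω - D ω * Y₀ ω :=
      funext fun ω => by ring
    rwa [heq]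
  -- conditional independences for the two pairs
  have hcind1 : CondIndepFun m hm D Y₁ P :=
    hunconf.comp measurable_id measurable_snd
  have hcind0 : CondIndepFun m hm (fun ω => 1 - D ω) Y₀ P :=
    hunconf.comp (measurable_const.sub measurable_id) measurable_fst
  -- product rules
  have key1 : P[fun ω => D ω * Y₁ ω|m] =ᵐ[P] fun ω => (P[D|m]) ω * (P[Y₁|m]) ω :=
    condexp_mul_of_condIndepFun_s6 hm hDmeas hY₁meas hcind1 hDbd hY₁int hDY₁int
  have key0 : P[fun ω => (1 - D ω) * Y₀ ω|m]
      =ᵐ[P] fun ω => (P[fun ω => 1 - D ω|m]) ω * (P[Y₀|m]) ω :=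
    condexp_mul_of_condIndepFun_s6 hm (measurable_const.sub hDmeas) hY₀meas hcind0 hD'bd
      hY₀int hD'Y₀int
  -- conditional expectation of 1 - D
  have hpD' : P[fun ω => 1 - D ω|m] =ᵐ[P] fun ω => 1 - pX ω := by
    have h : P[(fun _ => (1:ℝ)) - D|m] =ᵐ[P] P[fun _ => (1:ℝ)|m] - P[D|m] :=
      condExp_sub (integrable_const 1) hDint m
    rw [condExp_const hm] at h
    rw [hpX]
    exact h
  -- measurability of pX w.r.t. m
  have hpXm : StronglyMeasurable[m] pX := hpX ▸ stronglyMeasurable_condExp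
  have hg1m : StronglyMeasurable[m] (fun ω => (pX ω)⁻¹) :=
    hpXm.measurable.inv.stronglyMeasurable
  have hg0m : StronglyMeasurable[m] (fun ω => (1 - pX ω)⁻¹) :=
    (measurable_const.sub hpXm.measurable).inv.stronglyMeasurable
  -- bounds on the inverses
  have hbound1 : ∀ᵐ ω ∂P, ‖(pX ω)⁻¹‖ ≤ ε⁻¹ := by
    filter_upwards [hoverlap] with ω ⟨h1, h2⟩
    have hp : 0 < pX ω := lt_of_lt_of_le hε h1
    rw [Real.norm_eq_abs, abs_of_pos (inv_pos.mpr hp)]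
    exact one_div_le_one_div_of_le hε h1 |>.trans_eq (by rw [one_div]) |>.trans_eq' (by rw [one_div])
  have hbound0 : ∀ᵐ ω ∂P, ‖(1 - pX ω)⁻¹‖ ≤ ε⁻¹ := by
    filter_upwards [hoverlap] with ω ⟨h1, h2⟩
    have hp : 0 < 1 - pX ω := by linarith
    rw [Real.norm_eq_abs, abs_of_pos (inv_pos.mpr hp)]
    have : ε ≤ 1 - pX ω := by linarith
    exact one_div_le_one_div_of_le hε this |>.trans_eq (by rw [one_div]) |>.trans_eq' (by rw [one_div])
  -- integrability of the two pieces
  have I₁ : Integrable (fun ω => (pX ω)⁻¹ * (D ω * Y₁ ω)) P :=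
    hDY₁int.bdd_mul ((hg1m.mono hm).aestronglyMeasurable) hbound1
  have I₀ : Integrable (fun ω => (1 - pX ω)⁻¹ * ((1 - D ω) * Y₀ ω)) P :=
    hD'Y₀int.bdd_mul ((hg0m.mono hm).aestronglyMeasurable) hbound0
  -- pull-out property
  have hmul1 : P[fun ω => (pX ω)⁻¹ * (D ω * Y₁ ω)|m]
      =ᵐ[P] fun ω => (pX ω)⁻¹ * (P[fun ω => D ω * Y₁ ω|m]) ω :=
    condExp_stronglyMeasurable_mul_of_bound hm hg1m hDY₁int ε⁻¹ hbound1
  have hmul0 : P[fun ω => (1 - pX ω)⁻¹ * ((1 - D ω) * Y₀ ω)|m]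
      =ᵐ[P] fun ω => (1 - pX ω)⁻¹ * (P[fun ω => (1 - D ω) * Y₀ ω|m]) ω :=
    condExp_stronglyMeasurable_mul_of_bound hm hg0m hD'Y₀int ε⁻¹ hbound0
  -- first term
  have term1 : ∫ ω, (pX ω)⁻¹ * (D ω * Y₁ ω) ∂P = ∫ ω, Y₁ ω ∂P := by
    rw [← integral_condExp hm (f := fun ω => (pX ω)⁻¹ * (D ω * Y₁ ω)), ← integral_condExp hm (f := Y₁)]
    refine integral_congr_ae ?_
    filter_upwards [hmul1, key1, hoverlap] with ω h1 h2 h3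
    rw [h1, h2, ← hpX]
    have hp : pX ω ≠ 0 := ne_of_gt (lt_of_lt_of_le hε h3.1)
    rw [← mul_assoc, inv_mul_cancel₀ hp, one_mul]
  -- second term
  have term0 : ∫ ω, (1 - pX ω)⁻¹ * ((1 - D ω) * Y₀ ω) ∂P = ∫ ω, Y₀ ω ∂P := by
    rw [← integral_condExp hm (f := fun ω => (1 - pX ω)⁻¹ * ((1 - D ω) * Y₀ ω)), ← integral_condExp hm (f := Y₀)]
    refine integral_congr_ae ?_
    filter_upwards [hmul0, key0, hpD', hoverlap] with ω h1 h2 h3 h4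
    rw [h1, h2, h3]
    have hp : (1 : ℝ) - pX ω ≠ 0 := ne_of_gt (by linarith [h4.2])
    rw [← mul_assoc, inv_mul_cancel₀ hp, one_mul]
  -- pointwise identity for the integrand
  have hA : (fun ω => Y ω * (D ω - pX ω) / (pX ω * (1 - pX ω)))
      =ᵐ[P] fun ω => (pX ω)⁻¹ * (D ω * Y₁ ω) - (1 - pX ω)⁻¹ * ((1 - D ω) * Y₀ ω) := by
    filter_upwards [hoverlap] with ω ⟨h1, h2⟩
    have hp : pX ω ≠ 0 := ne_of_gt (lt_of_lt_of_le hε h1)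
    have hp' : (1 : ℝ) - pX ω ≠ 0 := ne_of_gt (by linarith)
    rw [hY ω]
    rcases hD01 ω with h | h <;> rw [h] <;> field_simp <;> ring
  rw [integral_congr_ae hA, integral_sub I₁ I₀, term1, term0]

end AuxATE

/-- Appendix result of the paper (after Athey and Imbens): under unconfoundedness
(conditional independence of the treatment indicator `D ∈ {0,1}` and the pair of potential
outcomes `(Y₀, Y₁)` given `𝒢 = σ(X)`) and overlap (`ε ≤ p(X) ≤ 1 − ε` a.s. for the
propensity score `p(X) = E[D | 𝒢]`), the transformed observed outcome
`Y·(D − p(X)) / (p(X)·(1 − p(X)))` has mean equal to the average treatment effect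
`E[Y₁] − E[Y₀]`. -/
theorem ate_transformed_outcome_unbiased
    {Ω : Type*} {mΩ : MeasurableSpace Ω} [StandardBorelSpace Ω] [Nonempty Ω]
    (P : Measure Ω) [IsProbabilityMeasure P]
    {d : ℕ} (X : Ω → (Fin d → ℝ)) (hX : Measurable X)
    (D Y₀ Y₁ : Ω → ℝ) (hDmeas : Measurable D) (hY₀meas : Measurable Y₀)
    (hY₁meas : Measurable Y₁)
    (hD01 : ∀ ω, D ω = 0 ∨ D ω = 1)
    (hY₀int : Integrable Y₀ P) (hY₁int : Integrable Y₁ P)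
    (hunconf : CondIndepFun (MeasurableSpace.comap X inferInstance)
      (measurable_iff_comap_le.mp hX) D (fun ω => (Y₀ ω, Y₁ ω)) P)
    (pX : Ω → ℝ) (hpX : pX = P[D | MeasurableSpace.comap X inferInstance])
    (ε : ℝ) (hε : 0 < ε)
    (hoverlap : ∀ᵐ ω ∂P, ε ≤ pX ω ∧ pX ω ≤ 1 - ε)
    (hDY₁int : Integrable (fun ω => D ω * Y₁ ω) P)
    (hDY₀int : Integrable (fun ω => D ω * Y₀ ω) P)
    (Y : Ω → ℝ) (hY : ∀ ω, Y ω = D ω * Y₁ ω + (1 - D ω) * Y₀ ω) :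
    ∫ ω, Y ω * (D ω - pX ω) / (pX ω * (1 - pX ω)) ∂P
      = (∫ ω, Y₁ ω ∂P) - ∫ ω, Y₀ ω ∂P := by
  exact ate_main_aux P (measurable_iff_comap_le.mp hX) D Y₀ Y₁ hDmeas hY₀meas hY₁meas hD01
    hY₀int hY₁int hunconf pX hpX ε hε hoverlap hDY₁int hDY₀int Y hY
end

section
/- Let (Ω, ℱ, P) be a probability space and let (Dₙ, Y₀ₙ, Y₁ₙ)ₙ be an i.i.d. sequence of ℝ³-valued random vectors such that each Dₙ takes only the values 0 and 1, p := P(D₁ = 1) ∈ (0, 1), Y₀₁ and Y₁₁ are integrable, D₁ and Y₀₁ are independent, and D₁·Y₁₁ is integrable. Define Yₙ := Dₙ·Y₁ₙ + (1 − Dₙ)·Y₀ₙ and Δₙ* := Yₙ·(Dₙ − p) / (p·(1 − p)). Then, almost surely, (1/N)·Σ_{n=1}^{N} Δₙ* converges to E[Y₁₁ − Y₀₁ | D₁ = 1] as N → ∞. -/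
open MeasureTheory ProbabilityTheory Filter

/-- Consistency of the sample average of the transformed outcomes for the ATET: for an i.i.d.
sequence `Z n = (Dₙ, Y₀ₙ, Y₁ₙ)` of ℝ³-valued random vectors with `Dₙ ∈ {0,1}`,
`p = P(D₀ = 1) ∈ (0,1)`, integrable potential outcomes, `D₀` independent of `Y₀₀`, and
`D₀·Y₁₀` integrable, the sample mean of `Δₙ* = Yₙ·(Dₙ − p)/(p·(1 − p))` with
`Yₙ = Dₙ·Y₁ₙ + (1 − Dₙ)·Y₀ₙ` converges almost surely to `E[Y₁ − Y₀ | D = 1]`. -/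
theorem atet_transformed_outcome_slln
    {Ω : Type*} [MeasurableSpace Ω] (P : Measure Ω) [IsProbabilityMeasure P]
    (Z : ℕ → Ω → ℝ × ℝ × ℝ) (hZmeas : ∀ n, Measurable (Z n))
    (hZindep : iIndepFun Z P)
    (hZident : ∀ n, IdentDistrib (Z n) (Z 0) P P)
    (D : ℕ → Ω → ℝ) (hD : ∀ n ω, D n ω = (Z n ω).1)
    (Y₀ : ℕ → Ω → ℝ) (hY₀ : ∀ n ω, Y₀ n ω = (Z n ω).2.1)
    (Y₁ : ℕ → Ω → ℝ) (hY₁ : ∀ n ω, Y₁ n ω = (Z n ω).2.2)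
    (hD01 : ∀ n ω, D n ω = 0 ∨ D n ω = 1)
    (p : ℝ) (hp : p = (P {ω | D 0 ω = 1}).toReal)
    (hp0 : 0 < p) (hp1 : p < 1)
    (hY₀int : Integrable (Y₀ 0) P) (hY₁int : Integrable (Y₁ 0) P)
    (hindep : IndepFun (D 0) (Y₀ 0) P)
    (hDY₁int : Integrable (fun ω => D 0 ω * Y₁ 0 ω) P)
    (Y : ℕ → Ω → ℝ) (hY : ∀ n ω, Y n ω = D n ω * Y₁ n ω + (1 - D n ω) * Y₀ n ω)
    (Δ : ℕ → Ω → ℝ) (hΔ : ∀ n ω, Δ n ω = Y n ω * (D n ω - p) / (p * (1 - p))) :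
    ∀ᵐ ω ∂P, Tendsto
      (fun N : ℕ => (1 / (N : ℝ)) * ∑ n ∈ Finset.range N, Δ n ω)
      atTop
      (nhds (∫ ω, (Y₁ 0 ω - Y₀ 0 ω) ∂(P[|{ω | D 0 ω = 1}]))) := by
  have hp0' : p ≠ 0 := ne_of_gt hp0
  have hp1' : (1 : ℝ) - p ≠ 0 := by linarith
  set A : Set Ω := {ω | D 0 ω = 1} with hAdef
  have hDmeas : Measurable (D 0) := by
    have : D 0 = fun ω => (Z 0 ω).1 := funext (hD 0)
    rw [this]; exact (hZmeas 0).fst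
  have hAmeas : MeasurableSet A := hDmeas (measurableSet_singleton 1)
  -- the transformed outcome as a measurable function of Z
  set g : ℝ × ℝ × ℝ → ℝ :=
    fun z => (z.1 * z.2.2 + (1 - z.1) * z.2.1) * (z.1 - p) / (p * (1 - p)) with hgdef
  have hgmeas : Measurable g := by
    apply Measurable.div _ measurable_const
    fun_prop
  have hΔg : ∀ n, Δ n = g ∘ Z n := by
    intro n; funext ω
    simp only [Function.comp_apply, hgdef, hΔ, hY, hD, hY₀, hY₁]
  -- pointwise formula for Δ
  have hΔeq : ∀ ω, Δ 0 ω = (D 0 ω * Y₁ 0 ω) * (1 / p)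
      - (Y₀ 0 ω - D 0 ω * Y₀ 0 ω) * (1 / (1 - p)) := by
    intro ω
    rcases hD01 0 ω with h | h <;>
      · rw [hΔ, hY, h]; field_simp; ring
  have hDbd : ∀ ω, ‖D 0 ω‖ ≤ 1 := by
    intro ω; rcases hD01 0 ω with h | h <;> simp [h]
  have hDY₀int : Integrable (fun ω => D 0 ω * Y₀ 0 ω) P :=
    hY₀int.bdd_mul hDmeas.aestronglyMeasurable (Filter.Eventually.of_forall hDbd)
  have hsubint : Integrable (fun ω => Y₀ 0 ω - D 0 ω * Y₀ 0 ω) P := hY₀int.sub hDY₀int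
  have hΔint : Integrable (Δ 0) P := by
    have : Integrable (fun ω => (D 0 ω * Y₁ 0 ω) * (1 / p)
        - (Y₀ 0 ω - D 0 ω * Y₀ 0 ω) * (1 / (1 - p))) P :=
      (hDY₁int.mul_const _).sub (hsubint.mul_const _)
    exact this.congr (Filter.Eventually.of_forall fun ω => (hΔeq ω).symm)
  -- the strong law of large numbers
  have hpair : Pairwise (Function.onFun (IndepFun · · P) Δ) := by
    intro i j hij
    have := hZindep.indepFun hij
    rw [Function.onFun, hΔg i, hΔg j]
    exact this.comp hgmeas hgmeas
  have hident : ∀ i, IdentDistrib (Δ i) (Δ 0) P P := by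
    intro i
    rw [hΔg i, hΔg 0]
    exact (hZident i).comp hgmeas
  have hslln := strong_law_ae (μ := P) Δ hΔint hpair hident
  -- identify the limit
  have hDint : Integrable (D 0) P := by
    have := (integrable_const (μ := P) (1 : ℝ)).bdd_mul hDmeas.aestronglyMeasurable (Filter.Eventually.of_forall hDbd)
    simpa using this
  have hDind : D 0 = A.indicator (fun _ => (1 : ℝ)) := by
    funext ω
    rcases hD01 0 ω with h | h
    · rw [Set.indicator_of_notMem, h]
      simp only [hAdef, Set.mem_setOf_eq, h]
      norm_num
    · rw [Set.indicator_of_mem, h]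
      simpa [hAdef] using h
  have hintD : ∫ ω, D 0 ω ∂P = p := by
    rw [hp, hDind]
    exact integral_indicator_one hAmeas
  have hintDY₀ : ∫ ω, D 0 ω * Y₀ 0 ω ∂P = p * ∫ ω, Y₀ 0 ω ∂P := by
    have h : ∫ ω, D 0 ω * Y₀ 0 ω ∂P = (∫ ω, D 0 ω ∂P) * ∫ ω, Y₀ 0 ω ∂P :=
      hindep.integral_mul_eq_mul_integral hDint.aestronglyMeasurable hY₀int.aestronglyMeasurable
    rw [h, hintD]
  have hPA : P A = ENNReal.ofReal p := by
    rw [hp, ENNReal.ofReal_toReal (measure_ne_top P A)]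
  have hcond : ∫ ω, (Y₁ 0 ω - Y₀ 0 ω) ∂(P[|A])
      = p⁻¹ * ∫ ω in A, (Y₁ 0 ω - Y₀ 0 ω) ∂P := by
    rw [ProbabilityTheory.cond, integral_smul_measure, hPA, ← ENNReal.ofReal_inv_of_pos hp0,
      ENNReal.toReal_ofReal (by positivity)]
    rfl
  have hsetint : ∫ ω in A, (Y₁ 0 ω - Y₀ 0 ω) ∂P
      = ∫ ω, D 0 ω * (Y₁ 0 ω - Y₀ 0 ω) ∂P := by
    rw [← integral_indicator hAmeas]
    congr 1
    funext ω
    rcases hD01 0 ω with h | h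
    · rw [Set.indicator_of_notMem, h, zero_mul]
      simp only [hAdef, Set.mem_setOf_eq, h]
      norm_num
    · rw [Set.indicator_of_mem, h, one_mul]
      simpa [hAdef] using h
  have hintDdiff : ∫ ω, D 0 ω * (Y₁ 0 ω - Y₀ 0 ω) ∂P
      = (∫ ω, D 0 ω * Y₁ 0 ω ∂P) - p * ∫ ω, Y₀ 0 ω ∂P := by
    rw [← hintDY₀, ← integral_sub hDY₁int hDY₀int]
    congr 1; funext ω; ring
  have hlimit : ∫ ω, Δ 0 ω ∂P = ∫ ω, (Y₁ 0 ω - Y₀ 0 ω) ∂(P[|A]) := by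
    have hL : ∫ ω, Δ 0 ω ∂P = (∫ ω, D 0 ω * Y₁ 0 ω ∂P) * (1 / p)
        - ((∫ ω, Y₀ 0 ω ∂P) - p * ∫ ω, Y₀ 0 ω ∂P) * (1 / (1 - p)) := by
      calc ∫ ω, Δ 0 ω ∂P
          = ∫ ω, ((D 0 ω * Y₁ 0 ω) * (1 / p)
              - (Y₀ 0 ω - D 0 ω * Y₀ 0 ω) * (1 / (1 - p))) ∂P := by
            exact integral_congr_ae (Filter.Eventually.of_forall hΔeq)
        _ = (∫ ω, D 0 ω * Y₁ 0 ω ∂P) * (1 / p)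
            - ((∫ ω, Y₀ 0 ω ∂P) - p * ∫ ω, Y₀ 0 ω ∂P) * (1 / (1 - p)) := by
            rw [integral_sub (hDY₁int.mul_const _) (hsubint.mul_const _),
              integral_mul_const, integral_mul_const,
              integral_sub hY₀int hDY₀int, hintDY₀]
    rw [hL, hcond, hsetint, hintDdiff]
    field_simp
  -- conclude
  filter_upwards [hslln] with ω hω
  rw [← hlimit]
  convert hω using 2 with N
  rw [smul_eq_mul, one_div]
end
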